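/- There exists R₀ > 1 such that for all R > R₀: for every w ∈ K⁻ the backward orbit is bounded, i.e. sup_{n ≥ 0} ‖H⁻ⁿ(w)‖ < ∞. -/

import Mathlib

open Complex Filter Topology

/-- The quadratic automorphism `H(x,y,z) = (xy + az, x² + by, x)` of `ℂ³`. -/
noncomputable def H (a b : ℂ) (w : ℂ × ℂ × ℂ) : ℂ × ℂ × ℂ :=
  (w.1 * w.2.1 + a * w.2.2, w.1 ^ 2 + b * w.2.1, w.1)

/-- The inverse automorphism
`H⁻¹(x,y,z) = (z, (y − z²)/b, (x − z(y − z²)/b)/a)`. -/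
noncomputable def Hinv (a b : ℂ) (w : ℂ × ℂ × ℂ) : ℂ × ℂ × ℂ :=
  (w.2.2, (w.2.1 - w.2.2 ^ 2) / b,
    (w.1 - w.2.2 * ((w.2.1 - w.2.2 ^ 2) / b)) / a)

/-- `V⁺ = {(x,y,z) : |z| > max{R, |x|, (1+δ)|y|^{1/2}}}`. -/
def Vplus (δ R : ℝ) : Set (ℂ × ℂ × ℂ) :=
  {w | ‖w.2.2‖ >
    max R (max (‖w.1‖) ((1 + δ) * Real.sqrt (‖w.2.1‖)))}

/-- `U⁻ = ⋃_{n≥0} Hⁿ(V⁺)`. -/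
noncomputable def Uminus (a b : ℂ) (δ R : ℝ) : Set (ℂ × ℂ × ℂ) :=
  ⋃ n : ℕ, (H a b)^[n] '' Vplus δ R

/-- `K⁻ = ℂ³ \ U⁻`. -/
noncomputable def Kminus (a b : ℂ) (δ R : ℝ) : Set (ℂ × ℂ × ℂ) :=
  (Uminus a b δ R)ᶜ


/-! A point that never enters `V⁺` under `H⁻¹` has `|z|` bounded by the threshold
`max{R, |x|, (1+δ)|y|^{1/2}}`, and this threshold does not increase along such an orbit once
`R` is large. It therefore stays below its initial value, and it bounds all three coordinates. -/

noncomputable def vplusBound (δ R : ℝ) (w : ℂ × ℂ × ℂ) : ℝ :=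
  max R (max ‖w.1‖ ((1 + δ) * Real.sqrt ‖w.2.1‖))

lemma le_vplusBound_of_notMem_Vplus {δ R : ℝ} {w : ℂ × ℂ × ℂ} (hw : w ∉ Vplus δ R) :
    ‖w.2.2‖ ≤ vplusBound δ R w :=
  not_lt.1 hw

lemma norm_le_of_notMem_Vplus {δ R : ℝ} (hδ : 0 ≤ δ) {w : ℂ × ℂ × ℂ} (hw : w ∉ Vplus δ R) :
    ‖w‖ ≤ max (vplusBound δ R w) (vplusBound δ R w ^ 2) := by
  have hx : ‖w.1‖ ≤ vplusBound δ R w := (le_max_left _ _).trans (le_max_right _ _)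
  have hu : Real.sqrt ‖w.2.1‖ ≤ vplusBound δ R w :=
    (le_mul_of_one_le_left (Real.sqrt_nonneg _) (by linarith)).trans
      ((le_max_right _ _).trans (le_max_right _ _))
  have hy : ‖w.2.1‖ ≤ vplusBound δ R w ^ 2 := by
    simpa only [Real.sq_sqrt (norm_nonneg _)] using
      pow_le_pow_left₀ (Real.sqrt_nonneg _) hu 2
  rw [Prod.norm_def, Prod.norm_def]
  exact max_le (le_max_of_le_left hx)
    (max_le (le_max_of_le_right hy) (le_max_of_le_left (le_vplusBound_of_notMem_Vplus hw)))

lemma leftInverse_H_Hinv {a b : ℂ} (ha : a ≠ 0) (hb : b ≠ 0) :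
    Function.LeftInverse (H a b) (Hinv a b) := by
  rintro ⟨x, y, z⟩
  simp only [H, Hinv, Prod.mk.injEq, and_true]
  constructor <;> field_simp <;> ring

lemma Hinv_fst (a b : ℂ) (w : ℂ × ℂ × ℂ) : (Hinv a b w).1 = w.2.2 := rfl

lemma b_mul_Hinv_snd_fst {a b : ℂ} (hb : b ≠ 0) (w : ℂ × ℂ × ℂ) :
    b * (Hinv a b w).2.1 = w.2.1 - w.2.2 ^ 2 :=
  mul_div_cancel₀ _ hb

lemma mul_Hinv_snd_fst {a b : ℂ} (ha : a ≠ 0) (w : ℂ × ℂ × ℂ) :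
    w.2.2 * (Hinv a b w).2.1 = w.1 - a * (Hinv a b w).2.2 := by
  rw [show a * (Hinv a b w).2.2 = w.1 - w.2.2 * (Hinv a b w).2.1 from mul_div_cancel₀ _ ha]
  ring

lemma Hinv_iterate_notMem_Vplus {a b : ℂ} (ha : a ≠ 0) (hb : b ≠ 0) {δ R : ℝ}
    {w : ℂ × ℂ × ℂ} (hw : w ∈ Kminus a b δ R) (n : ℕ) :
    (Hinv a b)^[n] w ∉ Vplus δ R := fun hn =>
  hw (Set.mem_iUnion.2 ⟨n, _, hn, (leftInverse_H_Hinv ha hb).iterate n w⟩)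

/-- One backward step, with `x = |x|`, `u = |y|^{1/2}`, `z = |z|` before it and `u'`, `z'` after
it (the new `|x|` is the old `|z|`). If the threshold grew, `u'` would dominate `u` and `z'`;
then `|b| > 1` forces `|z| > √δ u'`, and `z y' = x - a z'` caps `u'` by a constant,
contradicting `R` being large. -/
lemma max_le_max_of_backward_step {δ A R x u z u' z' : ℝ} (hδ : 0 < δ) (hA : 0 ≤ A)
    (hR0 : 0 ≤ R) (hR : (1 + δ) ^ 3 * (1 + A) ≤ Real.sqrt δ * R ^ 2)
    (hu : 0 ≤ u) (hz : 0 ≤ z) (hu' : 0 ≤ u')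
    (hcone : z ≤ max R (max x ((1 + δ) * u)))
    (hcone' : z' ≤ max R (max z ((1 + δ) * u')))
    (hy : (1 + δ) * u' ^ 2 ≤ u ^ 2 + z ^ 2) (hzy : z * u' ^ 2 ≤ x + A * z') :
    max R (max z ((1 + δ) * u')) ≤ max R (max x ((1 + δ) * u)) := by
  set m := max R (max x ((1 + δ) * u))
  refine max_le (le_max_left _ _) (max_le hcone ?_)
  by_contra! hm
  have hRm : R ≤ m := le_max_left _ _
  have hxm : x ≤ m := (le_max_left _ _).trans (le_max_right _ _)
  have hum : (1 + δ) * u ≤ m := (le_max_right _ _).trans (le_max_right _ _)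
  have hu'pos : 0 < u' := by nlinarith
  have huu' : u < u' := by nlinarith
  have hδz : δ * u' ^ 2 < z ^ 2 := by nlinarith
  have hsδ : Real.sqrt δ ^ 2 = δ := Real.sq_sqrt hδ.le
  have hzlow : Real.sqrt δ * u' < z :=
    lt_of_pow_lt_pow_left₀ 2 hz (by rw [mul_pow, hsδ]; exact hδz)
  have hz' : z' ≤ (1 + δ) * u' :=
    hcone'.trans (max_le (by linarith) (max_le (by linarith) le_rfl))
  have hcap : Real.sqrt δ * u' ^ 2 < (1 + δ) * (1 + A) := by
    have : Real.sqrt δ * u' * u' ^ 2 < (1 + δ) * (1 + A) * u' := by nlinarith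
    nlinarith
  have hRu' : R ^ 2 ≤ (1 + δ) ^ 2 * u' ^ 2 := by nlinarith
  nlinarith [mul_le_mul_of_nonneg_left hRu' (Real.sqrt_nonneg δ),
    mul_lt_mul_of_pos_left hcap (by positivity : (0 : ℝ) < (1 + δ) ^ 2)]

lemma vplusBound_Hinv_le {a b : ℂ} (ha : a ≠ 0) (hb : b ≠ 0) {δ R : ℝ} (hδ : 0 < δ)
    (hbδ : ‖b‖ = 1 + δ) (hR0 : 0 ≤ R) (hR : (1 + δ) ^ 3 * (1 + ‖a‖) ≤ Real.sqrt δ * R ^ 2)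
    {w : ℂ × ℂ × ℂ} (hw : w ∉ Vplus δ R) (hw' : Hinv a b w ∉ Vplus δ R) :
    vplusBound δ R (Hinv a b w) ≤ vplusBound δ R w := by
  have hsq : ∀ p : ℂ, Real.sqrt ‖p‖ ^ 2 = ‖p‖ := fun p => Real.sq_sqrt (norm_nonneg p)
  refine max_le_max_of_backward_step hδ (norm_nonneg a) hR0 hR (Real.sqrt_nonneg _)
    (norm_nonneg _) (Real.sqrt_nonneg _) (le_vplusBound_of_notMem_Vplus hw)
    (le_vplusBound_of_notMem_Vplus hw') ?_ ?_
  · rw [hsq, hsq, ← hbδ, ← norm_mul, b_mul_Hinv_snd_fst hb, ← norm_pow]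
    exact norm_sub_le _ _
  · rw [hsq, ← norm_mul, Hinv_fst, mul_Hinv_snd_fst ha, ← norm_mul]
    exact norm_sub_le _ _

lemma vplusBound_Hinv_iterate_le {a b : ℂ} (ha : a ≠ 0) (hb : b ≠ 0) {δ R : ℝ} (hδ : 0 < δ)
    (hbδ : ‖b‖ = 1 + δ) (hR0 : 0 ≤ R) (hR : (1 + δ) ^ 3 * (1 + ‖a‖) ≤ Real.sqrt δ * R ^ 2)
    {w : ℂ × ℂ × ℂ} (hw : w ∈ Kminus a b δ R) (n : ℕ) :
    vplusBound δ R ((Hinv a b)^[n] w) ≤ vplusBound δ R w := by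
  induction n with
  | zero => exact le_rfl
  | succ n ih =>
    have hout := Hinv_iterate_notMem_Vplus ha hb hw (n + 1)
    rw [Function.iterate_succ_apply'] at hout ⊢
    exact (vplusBound_Hinv_le ha hb hδ hbδ hR0 hR
      (Hinv_iterate_notMem_Vplus ha hb hw n) hout).trans ih

theorem stmt5 (a b : ℂ) (ha : a ≠ 0) (hb : b ≠ 0) (δ : ℝ) (hδ : 0 < δ)
    (hbδ : ‖b‖ = 1 + δ) :
    ∃ R₀ > (1 : ℝ), ∀ R > R₀, ∀ w ∈ Kminus a b δ R,
      ∃ B : ℝ, ∀ n : ℕ, ‖(Hinv a b)^[n] w‖ ≤ B := by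
  set K := (1 + δ) ^ 3 * (1 + ‖a‖) / Real.sqrt δ
  refine ⟨max 2 K, by simp, fun R hR w hw => ?_⟩
  have hR0 : 0 ≤ R := by linarith [le_max_left 2 K]
  -- `R > max 2 K` gives `R ^ 2 ≥ R > K`
  have hR : (1 + δ) ^ 3 * (1 + ‖a‖) ≤ Real.sqrt δ * R ^ 2 := by
    have hKR : K ≤ R ^ 2 := by nlinarith [le_max_left 2 K, le_max_right 2 K]
    rwa [div_le_iff₀' (Real.sqrt_pos.2 hδ)] at hKR
  have hdecr := vplusBound_Hinv_iterate_le ha hb hδ hbδ hR0 hR hw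
  exact ⟨_, fun n => (norm_le_of_notMem_Vplus hδ.le (Hinv_iterate_notMem_Vplus ha hb hw n)).trans
    (max_le_max (hdecr n) (pow_le_pow_left₀ (hR0.trans (le_max_left _ _)) (hdecr n) 2))⟩
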